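/- Let J : ℝ^d → ℝ be differentiable with L_g-Lipschitz gradient for some L_g > 0. Let α > 0, let θ, d ∈ ℝ^d, and set θ' = θ + α·d/‖d‖ (with the convention 0/‖0‖ = 0). Then −J(θ') ≤ −J(θ) − α‖d‖ + α‖d − ∇J(θ)‖ + L_g α²/2. -/

import Mathlib

/-! The Lipschitz bound on `∇J`, integrated along the segment from `θ` to `θ'`, gives the
quadratic upper bound `-J θ' ≤ -J θ - ⟪∇J θ, θ' - θ⟫ + L_g/2 ‖θ' - θ‖²`. With `u = d/‖d‖` one has
`‖u‖ ≤ 1` and `⟪∇J θ, u⟫ = ‖d‖ - ⟪d - ∇J θ, u⟫ ≥ ‖d‖ - ‖d - ∇J θ‖`, also when `d = 0`. -/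

open scoped RealInnerProductSpace

variable {E : Type*} [NormedAddCommGroup E] [InnerProductSpace ℝ E]

theorem HasGradientAt.hasDerivAt_comp_add_smul [CompleteSpace E] {J : E → ℝ} {g x v : E}
    {t : ℝ} (h : HasGradientAt J g (x + t • v)) :
    HasDerivAt (fun s : ℝ => J (x + s • v)) ⟪g, v⟫ t := by
  have hline : HasDerivAt (fun s : ℝ => x + s • v) v t := by
    simpa using ((hasDerivAt_id t).smul_const v).const_add x
  exact h.hasFDerivAt.comp_hasDerivAt t hline

theorem abs_sub_sub_inner_gradient_le [CompleteSpace E] {J : E → ℝ} {L : ℝ}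
    (hJ : Differentiable ℝ J) (hlip : ∀ x y, ‖gradient J x - gradient J y‖ ≤ L * ‖x - y‖)
    (x y : E) : |J y - J x - ⟪gradient J x, y - x⟫| ≤ L / 2 * ‖y - x‖ ^ 2 := by
  set v := y - x
  have hderiv (t : ℝ) : HasDerivAt (fun s : ℝ => J (x + s • v) - J x - s * ⟪gradient J x, v⟫)
      ⟪gradient J (x + t • v) - gradient J x, v⟫ t := by
    rw [inner_sub_left]
    exact (((hJ _).hasGradientAt.hasDerivAt_comp_add_smul).sub_const _).sub
      (hasDerivAt_mul_const _)
  have hbound (t : ℝ) :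
      HasDerivAt (fun s : ℝ => L / 2 * ‖v‖ ^ 2 * s ^ 2) (L * ‖v‖ ^ 2 * t) t :=
    ((hasDerivAt_pow 2 t).const_mul _).congr_deriv (by push_cast; ring)
  have hslope (t : ℝ) (ht : t ∈ Set.Ico (0 : ℝ) 1) :
      ‖⟪gradient J (x + t • v) - gradient J x, v⟫‖ ≤ L * ‖v‖ ^ 2 * t :=
    calc ‖⟪gradient J (x + t • v) - gradient J x, v⟫‖
        ≤ ‖gradient J (x + t • v) - gradient J x‖ * ‖v‖ := norm_inner_le_norm _ _
      _ ≤ L * ‖t • v‖ * ‖v‖ := by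
          gcongr
          simpa using hlip (x + t • v) x
      _ = L * ‖v‖ ^ 2 * t := by
          rw [norm_smul, Real.norm_of_nonneg ht.1]; ring
  have hquad := image_norm_le_of_norm_deriv_right_le_deriv_boundary
    (fun t _ => (hderiv t).continuousAt.continuousWithinAt)
    (fun t _ => (hderiv t).hasDerivWithinAt) (by simp) hbound hslope
    (Set.right_mem_Icc.2 zero_le_one)
  simpa [v] using hquad

theorem inner_inv_norm_smul_self (d : E) : ⟪d, ‖d‖⁻¹ • d⟫ = ‖d‖ := by
  rw [real_inner_smul_right, real_inner_self_eq_norm_sq]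
  rcases eq_or_ne ‖d‖ 0 with h | h
  · simp [h]
  · field_simp

theorem norm_inv_norm_smul_le_one (d : E) : ‖‖d‖⁻¹ • d‖ ≤ 1 :=
  mem_closedBall_zero_iff.1 (inv_norm_smul_mem_unitClosedBall d)

theorem sub_norm_sub_le_inner_inv_norm_smul (d g : E) :
    ‖d‖ - ‖d - g‖ ≤ ⟪g, ‖d‖⁻¹ • d⟫ := by
  have : ⟪d - g, ‖d‖⁻¹ • d⟫ ≤ ‖d - g‖ := (real_inner_le_norm _ _).trans
    (mul_le_of_le_one_right (norm_nonneg _) (norm_inv_norm_smul_le_one d))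
  rw [inner_sub_left, inner_inv_norm_smul_self] at this
  linarith

theorem normalized_step_descent_direction_form_general
    {dim : ℕ}
    (J : EuclideanSpace ℝ (Fin dim) → ℝ) (Lg : ℝ) (hLg : 0 < Lg)
    (hdiff : Differentiable ℝ J)
    (hlip : ∀ x y, ‖gradient J x - gradient J y‖ ≤ Lg * ‖x - y‖)
    (α : ℝ) (hα : 0 < α) (θ dvec : EuclideanSpace ℝ (Fin dim))
    (θ' : EuclideanSpace ℝ (Fin dim))
    (hθ' : θ' = θ + α • (‖dvec‖⁻¹ • dvec)) :
    -J θ' ≤ -J θ - α * ‖dvec‖ + α * ‖dvec - gradient J θ‖ + Lg * α ^ 2 / 2 := by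
  subst hθ'
  set u := ‖dvec‖⁻¹ • dvec
  have hquad := (abs_le.1 (abs_sub_sub_inner_gradient_le hdiff hlip θ (θ + α • u))).1
  rw [add_sub_cancel_left, real_inner_smul_right, norm_smul, Real.norm_of_nonneg hα.le] at hquad
  have hstep : α * ‖u‖ ≤ α := mul_le_of_le_one_right hα.le (norm_inv_norm_smul_le_one dvec)
  have hinner := sub_norm_sub_le_inner_inv_norm_smul dvec (gradient J θ)
  calc -J (θ + α • u) ≤ -J θ - α * ⟪gradient J θ, u⟫ + Lg / 2 * (α * ‖u‖) ^ 2 := by linarith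
    _ ≤ -J θ - α * (‖dvec‖ - ‖dvec - gradient J θ‖) + Lg / 2 * α ^ 2 := by gcongr
    _ = -J θ - α * ‖dvec‖ + α * ‖dvec - gradient J θ‖ + Lg * α ^ 2 / 2 := by ring

/-- Descent lemma for the normalized step (Lemma 1, intermediate form):
`−J(θ') ≤ −J(θ) − α‖d‖ + α‖d − ∇J(θ)‖ + L_g α²/2`. -/
theorem normalized_step_descent_direction_form
    {dim : ℕ} (hdim : 0 < dim)
    (J : EuclideanSpace ℝ (Fin dim) → ℝ) (Lg : ℝ) (hLg : 0 < Lg)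
    (hdiff : Differentiable ℝ J)
    (hlip : ∀ x y, ‖gradient J x - gradient J y‖ ≤ Lg * ‖x - y‖)
    (α : ℝ) (hα : 0 < α) (θ dvec : EuclideanSpace ℝ (Fin dim))
    (θ' : EuclideanSpace ℝ (Fin dim))
    (hθ' : θ' = θ + α • (‖dvec‖⁻¹ • dvec)) :
    -J θ' ≤ -J θ - α * ‖dvec‖ + α * ‖dvec - gradient J θ‖ + Lg * α ^ 2 / 2 :=
  normalized_step_descent_direction_form_general J Lg hLg hdiff hlip α hα θ dvec θ' hθ'
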